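/- Let (X, ν) be a measure space such that L²(X, ν) is infinite-dimensional and separable, H a separable complex Hilbert space, and φ : X → H a total family with all coefficient maps x ↦ ⟨φ_x, f⟩ ν-measurable, satisfying the lower frame condition: there is m > 0 with m‖f‖² ≤ ∫_X |⟨φ_x, f⟩|² dν(x) for all f ∈ H. Then there exist a family ψ : X → H and a constant c < ∞ such that for every g ∈ H the function x ↦ ⟨ψ_x, g⟩ is ν-measurable with ∫_X |⟨ψ_x, g⟩|² dν(x) ≤ c‖g‖², and such that for every f ∈ Dom(C_φ) = {f ∈ H : x ↦ ⟨φ_x, f⟩ ∈ L²(X, ν)} and every g ∈ H, the function x ↦ ⟨g, ψ_x⟩⟨φ_x, f⟩ is ν-integrable and ∫_X ⟨g, ψ_x⟩⟨φ_x, f⟩ dν(x) = ⟨g, f⟩. -/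

import Mathlib

/-!
The analysis operator `C f = (⟪φ x, f⟫)ₓ`, defined on `Dom(C_φ)` with values in `L²(ν)`, is
closed (an `L²`-convergent sequence converges a.e. along a subsequence) and, by the lower frame
condition, bounded below: `√m ‖f‖ ≤ ‖C f‖`. Hence its range `R` is closed and `C` has a bounded
left inverse `V = C⁻¹ ∘ P_R` with `‖V‖ ≤ m^(-1/2)`. The dual family is `ψ x = V (V† (φ x))`:
then `⟪ψ x, g⟫ = ⟪φ x, V (V† g)⟫`, and since `V† g ∈ R` this coefficient function is `V† g`
itself. This gives the Bessel bound `‖V† g‖² ≤ ‖g‖² / m` and the duality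
`∫ ⟪g, ψ x⟫ ⟪φ x, f⟫ = ⟪V† g, C f⟫ = ⟪g, V (C f)⟫ = ⟪g, f⟫`.
-/

open MeasureTheory Filter Topology
open scoped ComplexInnerProductSpace ENNReal NNReal InnerProduct ComplexConjugate

namespace LinearPMap

variable {𝕜 E F : Type*} [NormedAddCommGroup E] [NormedAddCommGroup F]

theorem isClosed_range_of_norm_le [NontriviallyNormedField 𝕜] [NormedSpace 𝕜 E]
    [NormedSpace 𝕜 F] [CompleteSpace E] [CompleteSpace F]
    {T : E →ₗ.[𝕜] F} (hT : T.IsClosed) {K : ℝ≥0} (hK : ∀ x : T.domain, ‖(x : E)‖ ≤ K * ‖T x‖) :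
    _root_.IsClosed (LinearMap.range T.toFun : Set F) := by
  have : CompleteSpace T.graph := hT.completeSpace_coe
  let snd : T.graph →L[𝕜] F := (ContinuousLinearMap.snd 𝕜 E F).comp T.graph.subtypeL
  have hsnd : AntilipschitzWith (max K 1) snd := snd.antilipschitz_of_bound fun p => by
    obtain ⟨x, hx₁, hx₂⟩ := T.mem_graph_iff.1 p.2
    have : ‖(p : E × F).1‖ ≤ K * ‖(p : E × F).2‖ := hx₁ ▸ hx₂ ▸ hK x
    calc ‖p‖ = max ‖(p : E × F).1‖ ‖(p : E × F).2‖ := rfl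
      _ ≤ max K 1 * ‖(p : E × F).2‖ := max_le (this.trans (by gcongr; exact le_max_left _ _))
          (le_mul_of_one_le_left (norm_nonneg _) (le_max_right _ _))
  have hrange : Set.range snd = LinearMap.range T.toFun := by
    rw [← T.graph_map_snd_eq_range, Submodule.map_coe, Set.image_eq_range]
    rfl
  exact hrange ▸ hsnd.isClosed_range snd.uniformContinuous

theorem exists_leftInverse_of_norm_le [RCLike 𝕜] [NormedSpace 𝕜 E] [InnerProductSpace 𝕜 F]
    [CompleteSpace F] {T : E →ₗ.[𝕜] F} (hT : _root_.IsClosed (LinearMap.range T.toFun : Set F))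
    {K : ℝ≥0} (hK : ∀ x : T.domain, ‖(x : E)‖ ≤ K * ‖T x‖) :
    ∃ V : F →L[𝕜] E, ‖V‖ ≤ K ∧ (∀ x : T.domain, V (T x) = x) ∧
      ∀ y ∈ (LinearMap.range T.toFun)ᗮ, V y = 0 := by
  set R := LinearMap.range T.toFun
  have : CompleteSpace R := hT.completeSpace_coe
  have hinj : Function.Injective T.toFun := fun x y hxy => by
    have h := hK (x - y)
    rwa [LinearPMap.map_sub, show T x = T y from hxy, sub_self, norm_zero, mul_zero,
      norm_le_zero_iff, Submodule.coe_sub, sub_eq_zero, ← Subtype.ext_iff] at h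
  let e := LinearEquiv.ofInjective T.toFun hinj
  let V : F →ₗ[𝕜] E := T.domain.subtype ∘ₗ e.symm.toLinearMap ∘ₗ R.orthogonalProjectionOnto
  have hV : ∀ y, ‖V y‖ ≤ K * ‖y‖ := fun y => by
    calc ‖V y‖ ≤ K * ‖T (e.symm (R.orthogonalProjectionOnto y))‖ := hK _
      _ = K * ‖R.orthogonalProjectionOnto y‖ :=
          congrArg (K * ‖·‖) (LinearEquiv.ofInjective_symm_apply T.toFun (h := hinj) _)
      _ ≤ K * ‖y‖ := by gcongr; exact R.norm_orthogonalProjectionOnto_apply_le y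
  refine ⟨V.mkContinuous K hV, V.mkContinuous_norm_le K.2 hV, fun x => ?_, fun y hy => ?_⟩
  · change (e.symm (R.orthogonalProjectionOnto (T x)) : E) = x
    rw [R.orthogonalProjectionOnto_mem_subspace_eq_self ⟨T x, x, rfl⟩]
    exact congrArg Subtype.val (e.symm_apply_apply x)
  · change (e.symm (R.orthogonalProjectionOnto y) : E) = 0
    simp [R.orthogonalProjectionOnto_apply_of_mem_orthogonal hy]

end LinearPMap

theorem ContinuousLinearMap.adjoint_apply_mem_of_forall_mem_orthogonal
    {𝕜 E F : Type*} [RCLike 𝕜] [NormedAddCommGroup E] [InnerProductSpace 𝕜 E] [CompleteSpace E]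
    [NormedAddCommGroup F] [InnerProductSpace 𝕜 F] [CompleteSpace F]
    {V : F →L[𝕜] E} {R : Submodule 𝕜 F} (hR : IsClosed (R : Set F))
    (hV : ∀ y ∈ Rᗮ, V y = 0) (g : E) : (V†) g ∈ R := by
  rw [← hR.submodule_topologicalClosure_eq, ← R.orthogonal_orthogonal_eq_closure]
  intro y hy
  rw [← inner_conj_symm, adjoint_inner_left, hV y hy, inner_zero_right, map_zero]

section L2

open scoped InnerProductSpace

variable {α : Type*} [MeasurableSpace α] {μ : Measure α}

theorem MeasureTheory.Lp.ae_eq_of_tendsto_of_ae_tendsto {E : Type*} [NormedAddCommGroup E]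
    {p : ℝ≥0∞} [Fact (1 ≤ p)] {F : ℕ → Lp E p μ} {G : Lp E p μ} {f : ℕ → α → E} {g : α → E}
    (hF : Tendsto F atTop (𝓝 G)) (hFf : ∀ n, F n =ᵐ[μ] f n)
    (hf : ∀ᵐ x ∂μ, Tendsto (fun n => f n x) atTop (𝓝 (g x))) : G =ᵐ[μ] g := by
  obtain ⟨ns, hns, hFG⟩ := (tendstoInMeasure_of_tendsto_Lp hF).exists_seq_tendsto_ae
  filter_upwards [hFG, hf, ae_all_iff.2 hFf] with x hFGx hfx hFfx
  simp only [hFfx] at hFGx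
  exact tendsto_nhds_unique hFGx (hfx.comp hns.tendsto_atTop)

variable {𝕜 : Type*} [RCLike 𝕜]

theorem MeasureTheory.MemLp.lintegral_nnnorm_sq_eq {u : α → 𝕜} (hu : MemLp u 2 μ) :
    ∫⁻ x, (‖u x‖₊ : ℝ≥0∞) ^ 2 ∂μ = ENNReal.ofReal (‖hu.toLp u‖ ^ 2) := by
  rw [Lp.norm_toLp, ENNReal.ofReal_pow ENNReal.toReal_nonneg, ENNReal.ofReal_toReal hu.2.ne]
  simpa only [ENNReal.coe_ofNat, NNReal.coe_ofNat, ENNReal.rpow_ofNat, enorm_eq_nnnorm] using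
    (eLpNorm_nnreal_pow_eq_lintegral (f := u) (μ := μ) (p := 2) two_ne_zero).symm

theorem MeasureTheory.MemLp.integral_conj_mul_eq_inner {u v : α → 𝕜} (hu : MemLp u 2 μ)
    (hv : MemLp v 2 μ) :
    Integrable (fun x => conj (u x) * v x) μ ∧
      ∫ x, conj (u x) * v x ∂μ = ⟪hu.toLp u, hv.toLp v⟫_𝕜 := by
  have h : (fun x => ⟪hu.toLp u x, hv.toLp v x⟫_𝕜) =ᵐ[μ] fun x => conj (u x) * v x := by
    filter_upwards [hu.coeFn_toLp, hv.coeFn_toLp] with x hux hvx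
    rw [hux, hvx, RCLike.inner_apply']
  exact ⟨(L2.integrable_inner _ _).congr h,
    (integral_congr_ae h).symm.trans (L2.inner_def _ _).symm⟩

end L2

section AnalysisOperator

open scoped InnerProductSpace

variable (𝕜 : Type*) {X H : Type*} [RCLike 𝕜] [MeasurableSpace X] (ν : Measure X)
  [NormedAddCommGroup H] [InnerProductSpace 𝕜 H]

def analysisDomain (φ : X → H) : Submodule 𝕜 H where
  carrier := {f | MemLp (fun x => ⟪φ x, f⟫_𝕜) 2 ν}
  zero_mem' := by
    change MemLp _ 2 ν
    simp_rw [inner_zero_right]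
    exact MemLp.zero
  add_mem' {f g} hf hg := by
    change MemLp _ 2 ν
    simp_rw [inner_add_right]
    exact hf.add hg
  smul_mem' c f hf := by
    change MemLp _ 2 ν
    simp_rw [inner_smul_right]
    exact hf.const_mul c

noncomputable def analysisOp (φ : X → H) : H →ₗ.[𝕜] Lp 𝕜 2 ν where
  domain := analysisDomain 𝕜 ν φ
  toFun :=
    { toFun := fun f => MemLp.toLp (fun x => ⟪φ x, (f : H)⟫_𝕜) f.2
      map_add' := fun _ _ =>
        (MemLp.toLp_congr _ _ (ae_of_all _ fun _ => inner_add_right _ _ _)).trans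
          (MemLp.toLp_add _ _)
      map_smul' := fun c f =>
        (MemLp.toLp_congr _ ((f.2 : MemLp _ 2 ν).const_smul c)
          (ae_of_all _ fun _ => inner_smul_right _ _ _)).trans (MemLp.toLp_const_smul c _) }

variable {𝕜 ν} {φ : X → H}

theorem mem_domain_analysisOp {f : H} :
    f ∈ (analysisOp 𝕜 ν φ).domain ↔ MemLp (fun x => ⟪φ x, f⟫_𝕜) 2 ν :=
  Iff.rfl

theorem analysisOp_apply (f : (analysisOp 𝕜 ν φ).domain) :
    analysisOp 𝕜 ν φ f = (mem_domain_analysisOp.1 f.2).toLp _ :=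
  rfl

theorem analysisOp_ae_eq (f : (analysisOp 𝕜 ν φ).domain) :
    analysisOp 𝕜 ν φ f =ᵐ[ν] fun x => ⟪φ x, (f : H)⟫_𝕜 :=
  MemLp.coeFn_toLp (mem_domain_analysisOp.1 f.2)

theorem analysisOp_isClosed : (analysisOp 𝕜 ν φ).IsClosed := by
  refine IsSeqClosed.isClosed fun p q hp hpq => ?_
  choose f hf₁ hf₂ using fun n => (analysisOp 𝕜 ν φ).mem_graph_iff.1 (hp n)
  have hfq : Tendsto (fun n => (f n : H)) atTop (𝓝 q.1) := by
    simpa only [hf₁] using hpq.fst_nhds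
  have hTfq : Tendsto (fun n => analysisOp 𝕜 ν φ (f n)) atTop (𝓝 q.2) := by
    simpa only [hf₂] using hpq.snd_nhds
  have hq : q.2 =ᵐ[ν] fun x => ⟪φ x, q.1⟫_𝕜 :=
    Lp.ae_eq_of_tendsto_of_ae_tendsto hTfq (fun n => analysisOp_ae_eq (f n))
      (ae_of_all _ fun _ => tendsto_const_nhds.inner hfq)
  have hmem : q.1 ∈ (analysisOp 𝕜 ν φ).domain :=
    mem_domain_analysisOp.2 ((Lp.memLp q.2).ae_eq hq)
  exact (analysisOp 𝕜 ν φ).mem_graph_iff.2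
    ⟨⟨q.1, hmem⟩, rfl, Lp.ext ((analysisOp_ae_eq _).trans hq.symm)⟩

theorem norm_le_inv_sqrt_mul_norm_analysisOp {m : ℝ} (hm : 0 < m) (f : (analysisOp 𝕜 ν φ).domain)
    (hf : ENNReal.ofReal (m * ‖(f : H)‖ ^ 2) ≤ ∫⁻ x, (‖⟪φ x, (f : H)⟫_𝕜‖₊ : ℝ≥0∞) ^ 2 ∂ν) :
    ‖(f : H)‖ ≤ (Real.sqrt m)⁻¹ * ‖analysisOp 𝕜 ν φ f‖ := by
  rw [(mem_domain_analysisOp.1 f.2).lintegral_nnnorm_sq_eq, ← analysisOp_apply,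
    ENNReal.ofReal_le_ofReal_iff (sq_nonneg _)] at hf
  rw [← div_eq_inv_mul, le_div_iff₀' (Real.sqrt_pos.2 hm)]
  refine (pow_le_pow_iff_left₀ (by positivity) (norm_nonneg _) two_ne_zero).1 ?_
  rwa [mul_pow, Real.sq_sqrt hm.le]

end AnalysisOperator

section LeftInverse

open scoped InnerProductSpace

variable {𝕜 X H : Type*} [RCLike 𝕜] [MeasurableSpace X] {ν : Measure X}
  [NormedAddCommGroup H] [InnerProductSpace 𝕜 H] [CompleteSpace H] {φ : X → H}
  {V : Lp 𝕜 2 ν →L[𝕜] H}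

theorem exists_analysisOp_eq_adjoint (hVT : ∀ f, V (analysisOp 𝕜 ν φ f) = f)
    (hV : ∀ g, (V†) g ∈ LinearMap.range (analysisOp 𝕜 ν φ).toFun) (g : H) :
    ∃ f : (analysisOp 𝕜 ν φ).domain, (f : H) = V ((V†) g) ∧ analysisOp 𝕜 ν φ f = (V†) g := by
  obtain ⟨f, hf⟩ := hV g
  exact ⟨f, by rw [← hf, ← hVT f]; rfl, hf⟩

theorem lintegral_inner_leftInverse_adjoint (hVT : ∀ f, V (analysisOp 𝕜 ν φ f) = f)
    (hV : ∀ g, (V†) g ∈ LinearMap.range (analysisOp 𝕜 ν φ).toFun) (g : H) :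
    ∫⁻ x, (‖⟪φ x, V ((V†) g)⟫_𝕜‖₊ : ℝ≥0∞) ^ 2 ∂ν = ENNReal.ofReal (‖(V†) g‖ ^ 2) := by
  obtain ⟨f, hf, hTf⟩ := exists_analysisOp_eq_adjoint hVT hV g
  rw [← hf, (mem_domain_analysisOp.1 f.2).lintegral_nnnorm_sq_eq, ← analysisOp_apply, hTf]

theorem integral_conj_inner_leftInverse_adjoint_mul_inner (hVT : ∀ f, V (analysisOp 𝕜 ν φ f) = f)
    (hV : ∀ g, (V†) g ∈ LinearMap.range (analysisOp 𝕜 ν φ).toFun)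
    (g : H) (f : (analysisOp 𝕜 ν φ).domain) :
    Integrable (fun x => conj ⟪φ x, V ((V†) g)⟫_𝕜 * ⟪φ x, (f : H)⟫_𝕜) ν ∧
      ∫ x, conj ⟪φ x, V ((V†) g)⟫_𝕜 * ⟪φ x, (f : H)⟫_𝕜 ∂ν = ⟪g, (f : H)⟫_𝕜 := by
  obtain ⟨f', hf', hTf'⟩ := exists_analysisOp_eq_adjoint hVT hV g
  rw [← hf']
  refine ((mem_domain_analysisOp.1 f'.2).integral_conj_mul_eq_inner
    (mem_domain_analysisOp.1 f.2)).imp_right fun h => ?_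
  rw [h, ← analysisOp_apply, ← analysisOp_apply, hTf', ContinuousLinearMap.adjoint_inner_left,
    hVT]

end LeftInverse

theorem lower_semiframe_has_upper_dual_general
    {X : Type*} [MeasurableSpace X] (ν : Measure X)
    {H : Type*} [NormedAddCommGroup H] [InnerProductSpace ℂ H] [CompleteSpace H]
    (φ : X → H)
    (hφmeas : ∀ f : H, AEMeasurable (fun x => ⟪φ x, f⟫) ν)
    (m : ℝ) (hm : 0 < m)
    (hlower : ∀ f : H,
      ENNReal.ofReal (m * ‖f‖ ^ 2) ≤ ∫⁻ x, (‖⟪φ x, f⟫‖₊ : ℝ≥0∞) ^ 2 ∂ν) :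
    ∃ (ψ : X → H) (c : ℝ),
      (∀ g : H, AEMeasurable (fun x => ⟪ψ x, g⟫) ν ∧
        ∫⁻ x, (‖⟪ψ x, g⟫‖₊ : ℝ≥0∞) ^ 2 ∂ν ≤ ENNReal.ofReal (c * ‖g‖ ^ 2)) ∧
      ∀ f : H, MemLp (fun x => ⟪φ x, f⟫) 2 ν →
        ∀ g : H, Integrable (fun x => ⟪g, ψ x⟫ * ⟪φ x, f⟫) ν ∧
          ∫ x, ⟪g, ψ x⟫ * ⟪φ x, f⟫ ∂ν = ⟪g, f⟫ := by
  set T := analysisOp ℂ ν φ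
  let K : ℝ≥0 := ⟨(Real.sqrt m)⁻¹, by positivity⟩
  have hK : ∀ f : T.domain, ‖(f : H)‖ ≤ K * ‖T f‖ := fun f =>
    norm_le_inv_sqrt_mul_norm_analysisOp hm f (hlower f)
  have hR := T.isClosed_range_of_norm_le analysisOp_isClosed hK
  obtain ⟨V, hVK, hVT, hV⟩ := T.exists_leftInverse_of_norm_le hR hK
  have hVadj := V.adjoint_apply_mem_of_forall_mem_orthogonal hR hV
  have hψ : ∀ g x, ⟪V ((V†) (φ x)), g⟫ = ⟪φ x, V ((V†) g)⟫ := fun g x => by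
    rw [← ContinuousLinearMap.adjoint_inner_right, ContinuousLinearMap.adjoint_inner_left]
  refine ⟨fun x => V ((V†) (φ x)), K ^ 2, fun g => ⟨?_, ?_⟩, fun f hf g => ?_⟩
  · simpa only [hψ] using hφmeas (V ((V†) g))
  · have hVadj_le : ‖(V†) g‖ ≤ K * ‖g‖ :=
      (V†).le_of_opNorm_le (by rwa [ContinuousLinearMap.adjoint.norm_map]) g
    simp only [hψ, lintegral_inner_leftInverse_adjoint hVT hVadj, ← mul_pow]
    gcongr
  · simpa only [← hψ, inner_conj_symm] using
      integral_conj_inner_leftInverse_adjoint_mul_inner hVT hVadj g ⟨f, hf⟩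

/-- If `L²(X, ν)` is infinite-dimensional and separable, `H` is separable,
and `φ : X → H` is a total family satisfying the lower frame condition, then there exists a
Bessel family `ψ : X → H` which is dual to `φ` on `Dom(C_φ)`. -/
theorem lower_semiframe_has_upper_dual
    {X : Type*} [MeasurableSpace X] (ν : Measure X)
    {H : Type*} [NormedAddCommGroup H] [InnerProductSpace ℂ H] [CompleteSpace H]
    [TopologicalSpace.SeparableSpace H]
    [TopologicalSpace.SeparableSpace (Lp ℂ 2 ν)]
    (hinfdim : ¬ FiniteDimensional ℂ (Lp ℂ 2 ν))
    (φ : X → H)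
    (hφmeas : ∀ f : H, AEMeasurable (fun x => ⟪φ x, f⟫) ν)
    (hφtotal : (Submodule.span ℂ (Set.range φ)).topologicalClosure = ⊤)
    (m : ℝ) (hm : 0 < m)
    (hlower : ∀ f : H,
      ENNReal.ofReal (m * ‖f‖ ^ 2) ≤ ∫⁻ x, (‖⟪φ x, f⟫‖₊ : ℝ≥0∞) ^ 2 ∂ν) :
    ∃ (ψ : X → H) (c : ℝ),
      (∀ g : H, AEMeasurable (fun x => ⟪ψ x, g⟫) ν ∧
        ∫⁻ x, (‖⟪ψ x, g⟫‖₊ : ℝ≥0∞) ^ 2 ∂ν ≤ ENNReal.ofReal (c * ‖g‖ ^ 2)) ∧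
      ∀ f : H, MemLp (fun x => ⟪φ x, f⟫) 2 ν →
        ∀ g : H, Integrable (fun x => ⟪g, ψ x⟫ * ⟪φ x, f⟫) ν ∧
          ∫ x, ⟪g, ψ x⟫ * ⟪φ x, f⟫ ∂ν = ⟪g, f⟫ :=
  lower_semiframe_has_upper_dual_general ν φ hφmeas m hm hlower
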